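/- The q-twisting of the Bernstein operator equals the Jing Hall-Littlewood operator: for any symmetric function P, the operator Ṽ^q applied to S(z) satisfies (S(z))~^q P[X] = P[X − (1−q)/z]·Ω[zX] = H(z)P[X]. -/

import Mathlib

open MvPolynomial

noncomputable section

/-- The field `ℚ(q)` of rational functions in the parameter `q`. -/
abbrev Fq : Type := RatFunc ℚ

/-- The parameter `q`. -/
def qp : Fq := RatFunc.X

/-- The ring `Λ ⊗ ℚ(q)` of symmetric functions with parameter `q`, presented as
`ℚ(q)[p₁, p₂, p₃, …]`, where the variable `k` stands for the power sum `p_{k+1}`. -/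
abbrev SymF : Type := MvPolynomial ℕ Fq

/-- The power sum `p_n` (for `n ≥ 1`). -/
def psumF (n : ℕ) : SymF := X (n - 1)

/-- The complete homogeneous symmetric functions `h_n`, defined via Newton's identity
`n·h_n = ∑_{i=1}^n p_i h_{n-i}`, so that `Ω[zX] = ∑_{n ≥ 0} h_n[X] zⁿ`. -/
def hfunF : ℕ → SymF
  | 0 => 1
  | (n + 1) =>
      C (((n : Fq) + 1)⁻¹) *
        ∑ i ∈ Finset.range (n + 1), psumF (i + 1) * hfunF (n - i)
  decreasing_by exact Nat.lt_succ_of_le (Nat.sub_le n i)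

/-- Laurent series in `z` with coefficients in `Λ ⊗ ℚ(q)`. -/
abbrev LSF : Type := LaurentSeries SymF

/-- The series `Ω[zX] = ∑_{n ≥ 0} h_n[X] zⁿ`. -/
def OmegaF : LSF := HahnSeries.ofPowerSeries ℤ SymF (PowerSeries.mk hfunF)

/-- The plethystic substitution `P[X] ↦ P[X − (1−q)/z]`, determined on power sums by
`p_k ↦ p_k − (1 − q^k) z^{−k}`. -/
def substHF : SymF →+* LSF :=
  eval₂Hom ((HahnSeries.C : SymF →+* LSF).comp (MvPolynomial.C : Fq →+* SymF))
    (fun k => HahnSeries.C (X k : SymF) -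
      HahnSeries.single (-(k + 1 : ℤ)) (C (1 - qp ^ (k + 1)) : SymF))

/-- Jing's Hall-Littlewood vertex operator `H_m`: the coefficient of `z^m` in
`H(z)P[X] = P[X − (1−q)/z]·Ω[zX]`. -/
def Hop (m : ℤ) (P : SymF) : SymF := (substHF P * OmegaF).coeff m

/-- Symmetric functions in two independent alphabets `X, Y` over `ℚ(q)`:
`Sum.inl k` stands for `p_{k+1}[X]` and `Sum.inr k` for `p_{k+1}[Y]`. -/
abbrev SymXY : Type := MvPolynomial (ℕ ⊕ ℕ) Fq

/-- The plethystic substitution `P[X] ↦ P[qX + (1−q)Y]`, determined on power sums by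
`p_k ↦ q^k p_k[X] + (1 − q^k) p_k[Y]`. -/
def splitXY : SymF →+* SymXY :=
  eval₂Hom (MvPolynomial.C : Fq →+* SymXY)
    (fun k => C (qp ^ (k + 1)) * X (Sum.inl k) + C (1 - qp ^ (k + 1)) * X (Sum.inr k))

/-- Laurent series in `z` with coefficients in the two-alphabet ring. -/
abbrev LSXY : Type := LaurentSeries SymXY

/-- The series `Ω[zY] = ∑_{n ≥ 0} h_n[Y] zⁿ`. -/
def OmegaY : LSXY :=
  HahnSeries.ofPowerSeries ℤ SymXY (PowerSeries.mk fun n => rename Sum.inr (hfunF n))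

/-- The Bernstein substitution acting on the `Y` alphabet only:
`p_k[X] ↦ p_k[X]` and `p_k[Y] ↦ p_k[Y] − z^{−k}`. -/
def substSY : SymXY →+* LSXY :=
  eval₂Hom ((HahnSeries.C : SymXY →+* LSXY).comp (MvPolynomial.C : Fq →+* SymXY))
    (fun s => match s with
      | Sum.inl k => HahnSeries.C (X (Sum.inl k) : SymXY)
      | Sum.inr k => HahnSeries.C (X (Sum.inr k) : SymXY) -
          HahnSeries.single (-(k + 1 : ℤ)) 1)

/-- Setting the `Y` alphabet equal to the `X` alphabet: `p_k[X], p_k[Y] ↦ p_k[X]`. -/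
def setYX : SymXY →+* SymF :=
  eval₂Hom (MvPolynomial.C : Fq →+* SymF) (fun s => X (Sum.elim id id s))

lemma ofPowerSeries_coeff_neg {R : Type*} [Semiring R] (x : PowerSeries R) {n : ℤ}
    (hn : n < 0) : (HahnSeries.ofPowerSeries ℤ R x).coeff n = 0 := by
  rw [HahnSeries.ofPowerSeries_apply]
  apply HahnSeries.embDomain_notin_range
  rintro ⟨a, rfl⟩
  exact (Nat.cast_nonneg (α := ℤ) a).not_gt hn

/-- The coefficientwise ring hom `LSXY →+* LSF` induced by `setYX`. -/
def mapYX : LSXY →+* LSF where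
  toFun x := x.map (setYX : SymXY →+* SymF)
  map_one' := by
    ext n
    by_cases h : n = 0 <;> simp [HahnSeries.map_coeff, HahnSeries.coeff_one, h]
  map_mul' _ _ := HahnSeries.map_mul (setYX : SymXY →+* SymF).toNonUnitalRingHom
  map_zero' := by ext n; simp [HahnSeries.map_coeff]
  map_add' x y := by ext n; simp [HahnSeries.map_coeff]

lemma mapYX_coeff (x : LSXY) (n : ℤ) : (mapYX x).coeff n = setYX (x.coeff n) := rfl

lemma mapYX_C_hahn (r : SymXY) :
    mapYX (HahnSeries.C r) = HahnSeries.C (setYX r) := by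
  ext n
  by_cases h : n = 0 <;>
    simp [mapYX_coeff, HahnSeries.C_apply, HahnSeries.coeff_single, h]

lemma mapYX_single (a : ℤ) (r : SymXY) :
    mapYX (HahnSeries.single a r) = HahnSeries.single a (setYX r) := by
  ext n
  by_cases h : n = a <;> simp [mapYX_coeff, HahnSeries.coeff_single, h]

lemma setYX_rename (p : SymF) : setYX (rename Sum.inr p) = p := by
  rw [setYX, eval₂Hom_rename]
  conv_rhs => rw [show p = RingHom.id _ p from rfl]
  congr 1
  apply MvPolynomial.ringHom_ext <;> simp

lemma mapYX_OmegaY : mapYX OmegaY = OmegaF := by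
  ext n
  rw [mapYX_coeff, OmegaY, OmegaF]
  rcases le_or_gt 0 n with h | h
  · lift n to ℕ using h
    rw [HahnSeries.ofPowerSeries_apply_coeff, HahnSeries.ofPowerSeries_apply_coeff]
    simp [setYX_rename]
  · rw [ofPowerSeries_coeff_neg _ h, ofPowerSeries_coeff_neg _ h, map_zero]

lemma substSY_Xl (k : ℕ) :
    substSY (X (Sum.inl k)) = HahnSeries.C (X (Sum.inl k) : SymXY) := by
  simp [substSY]

lemma substSY_Xr (k : ℕ) :
    substSY (X (Sum.inr k)) = HahnSeries.C (X (Sum.inr k) : SymXY) -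
      HahnSeries.single (-(k + 1 : ℤ)) 1 := by
  simp [substSY]

lemma key_hom_eq :
    mapYX.comp (substSY.comp splitXY) = substHF := by
  apply MvPolynomial.ringHom_ext
  · intro a
    have h1 : splitXY (C a : SymF) = C a := by simp [splitXY]
    have h2 : substSY (C a : SymXY) = HahnSeries.C (C a) := by simp [substSY]
    have h3 : substHF (C a : SymF) = HahnSeries.C (C a) := by simp [substHF]
    simp only [RingHom.comp_apply, h1, h2, h3, mapYX_C_hahn]
    congr 1
    simp [setYX]
  · intro k
    have h1 : splitXY (X k : SymF) = C (qp ^ (k + 1)) * X (Sum.inl k) +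
        C (1 - qp ^ (k + 1)) * X (Sum.inr k) := by simp [splitXY]
    have h2 : ∀ a : Fq, substSY (C a : SymXY) = HahnSeries.C (C a) := by
      intro a; simp [substSY]
    have h3 : substHF (X k : SymF) = HahnSeries.C (X k : SymF) -
        HahnSeries.single (-(k + 1 : ℤ)) (C (1 - qp ^ (k + 1))) := by simp [substHF]
    have hl : setYX (X (Sum.inl k) : SymXY) = X k := by simp [setYX]
    have hr : setYX (X (Sum.inr k) : SymXY) = X k := by simp [setYX]
    have hc : ∀ a : Fq, setYX (C a : SymXY) = C a := by intro a; simp [setYX]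
    simp only [RingHom.comp_apply, h1, h3, map_add, map_mul, h2, substSY_Xl, substSY_Xr,
      map_sub, mapYX_C_hahn, mapYX_single, hl, hr, hc, map_one]
    have e2 : (HahnSeries.single (-(k + 1 : ℤ)) (1 - C (qp ^ (k + 1)) : SymF) : LSF) =
        (1 - HahnSeries.C (C (qp ^ (k + 1)) : SymF)) *
          HahnSeries.single (-(k + 1 : ℤ)) (1 : SymF) := by
      rw [sub_mul, one_mul, HahnSeries.C_apply, HahnSeries.single_mul_single,
        zero_add, mul_one]
      ext n
      simp only [HahnSeries.coeff_sub, HahnSeries.coeff_single]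
      split_ifs <;> simp
    rw [e2]
    ring


/-- The `q`-twisting of the Bernstein operator equals Jing's Hall-Littlewood operator:
for every symmetric function `P` and every `m`, the coefficient of `z^m` in
`S^Y(z) P[qX + (1−q)Y] |_{Y=X}` equals `H_m P`, i.e.
`(S(z))~^q P[X] = P[X − (1−q)/z]·Ω[zX] = H(z)P[X]`. -/
theorem qtwist_bernstein_eq_jing (m : ℤ) (P : SymF) :
    setYX ((substSY (splitXY P) * OmegaY).coeff m) = Hop m P := by
  rw [Hop, ← mapYX_coeff, map_mul, mapYX_OmegaY]
  congr 2
  exact DFunLike.congr_fun key_hom_eq P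

end
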